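/- Let $k \geq 1$ and let $H$ be a $(2,d)$-hypergraph. Let $U$ be a subedge of $H$ with $|U| > (3k+1)d$, and let $e_1, \dots, e_{3k+1} \in E(H)$ (not necessarily distinct) be edges whose union contains the unique witnessing edge $e(U)$ of $U$. Then $e(U) = e_i$ for some $i \in \{1, \dots, 3k+1\}$. -/

import Mathlib

open Finset

open scoped Classical

variable {α : Type*}

structure Hypergraph' (α : Type*) where
  verts : Finset α
  edges : Finset (Finset α)
  edge_sub : ∀ e ∈ edges, e ⊆ verts

namespace Hypergraph'

/-- `U` is a subedge of `H`: it is contained in some hyperedge. -/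
def IsSubedge (H : Hypergraph' α) (U : Finset α) : Prop := ∃ e ∈ H.edges, U ⊆ e

/-- `H` is a `(2,d)`-hypergraph: any two distinct edges intersect in at most `d` vertices. -/
def Is2dHypergraph (H : Hypergraph' α) (d : ℕ) : Prop :=
  ∀ e ∈ H.edges, ∀ f ∈ H.edges, e ≠ f → (e ∩ f).card ≤ d

/-- The induced subhypergraph `H[U]`. -/
noncomputable def induce (H : Hypergraph' α) (U : Finset α) : Hypergraph' α where
  verts := U
  edges := (H.edges.image (· ∩ U)).filter (· ≠ ∅)
  edge_sub := by
    intro e he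
    simp only [Finset.mem_filter, Finset.mem_image] at he
    obtain ⟨⟨f, hf, rfl⟩, -⟩ := he
    exact Finset.inter_subset_right

/-- The adjacency graph of a hypergraph: two distinct vertices are adjacent
iff they lie in a common edge. -/
def adjGraph (H : Hypergraph' α) : SimpleGraph α where
  Adj v w := v ≠ w ∧ ∃ e ∈ H.edges, v ∈ e ∧ w ∈ e
  symm := ⟨by rintro v w ⟨hne, e, he, hv, hw⟩; exact ⟨hne.symm, e, he, hw, hv⟩⟩
  loopless := ⟨by rintro v ⟨hne, -⟩; exact hne rfl⟩

/-- Adjacency in `H` avoiding the vertex set `S` (i.e. adjacency in `H[V(H) \ S]`). -/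
def avoidGraph (H : Hypergraph' α) (S : Finset α) : SimpleGraph α where
  Adj v w := v ≠ w ∧ v ∉ S ∧ w ∉ S ∧ ∃ e ∈ H.edges, v ∈ e ∧ w ∈ e
  symm := ⟨by rintro v w ⟨hne, hv, hw, e, he, h1, h2⟩; exact ⟨hne.symm, hw, hv, e, he, h2, h1⟩⟩
  loopless := ⟨by rintro v ⟨hne, -⟩; exact hne rfl⟩

/-- `S` is an `(A,B)`-separator of `H`: no path of `H[V(H) \ S]` joins
a vertex of `A \ S` to a vertex of `B \ S`. -/
def IsSeparator (H : Hypergraph' α) (A B S : Finset α) : Prop :=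
  ∀ a ∈ A, a ∉ S → ∀ b ∈ B, b ∉ S → ¬ (H.avoidGraph S).Reachable a b

/-- `U` has an edge cover of weight at most `k` (edge cover number `ρ(U) ≤ k`). -/
def CoverLE (H : Hypergraph' α) (U : Finset α) (k : ℕ) : Prop :=
  ∃ F : Finset (Finset α), F ⊆ H.edges ∧ U ⊆ F.biUnion id ∧ F.card ≤ k

/-- `(T, B)` is a tree decomposition of `H`. -/
def IsTreeDecomp (H : Hypergraph' α) {ι : Type*} (T : SimpleGraph ι) (B : ι → Finset α) : Prop :=
  T.IsTree ∧ (∀ u, B u ⊆ H.verts) ∧ (∀ e ∈ H.edges, ∃ u, e ⊆ B u) ∧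
  (∀ v ∈ H.verts, (T.induce {u | v ∈ B u}).Connected)

/-- Generalised hypertree width of `H` is at most `k`. -/
def ghwLE (H : Hypergraph' α) (k : ℕ) : Prop :=
  ∃ (ι : Type) (T : SimpleGraph ι) (B : ι → Finset α),
    H.IsTreeDecomp T B ∧ ∀ u, H.CoverLE (B u) k

/-- Two subedges are incompatible if their union is not a subedge. -/
def Incompatible (H : Hypergraph' α) (X Y : Finset α) : Prop := ¬ H.IsSubedge (X ∪ Y)

/-- `U₁,…,U_a, S₁,…,S_b` form an `(a,b)` subedge hypergrid (shyg). -/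
def IsShyg (H : Hypergraph' α) {a b : ℕ} (U : Fin a → Finset α) (S : Fin b → Finset α) : Prop :=
  (∀ i, H.IsSubedge (U i)) ∧ (∀ j, H.IsSubedge (S j)) ∧
  (∀ i i', i ≠ i' → H.Incompatible (U i) (U i')) ∧
  (∀ j j', j ≠ j' → H.Incompatible (S j) (S j')) ∧
  (∀ i j, H.Incompatible (U i) (S j)) ∧
  (∀ i i', i ≠ i' → Disjoint (U i) (U i')) ∧
  (∀ j i, (S j ∩ U i).Nonempty)

/-- A strong shyg: additionally the `S j` intersect pairwise disjointly inside `⋃ U i`. -/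
def IsStrongShyg (H : Hypergraph' α) {a b : ℕ}
    (U : Fin a → Finset α) (S : Fin b → Finset α) : Prop :=
  H.IsShyg U S ∧ ∀ j j', j ≠ j' → S j ∩ S j' ∩ Finset.univ.biUnion U = ∅

/-- `H` has a strong `(a,b)`-shyg. -/
def HasStrongShyg (H : Hypergraph' α) (a b : ℕ) : Prop :=
  ∃ (U : Fin a → Finset α) (S : Fin b → Finset α), H.IsStrongShyg U S

/-- `ext(C, E')`: the edges of `E'` meeting `C`. -/
noncomputable def ext (E' : Finset (Finset α)) (C : Finset α) : Finset (Finset α) :=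
  E'.filter fun e => (e ∩ C).Nonempty

/-- `C` is (the vertex set of) a connected component of `H`. -/
def IsConnComp (H : Hypergraph' α) (C : Finset α) : Prop :=
  ∃ v ∈ H.verts, ∀ w, w ∈ C ↔ w ∈ H.verts ∧ H.adjGraph.Reachable v w

end Hypergraph'

/-- The vertex set of `T_{x,Y}`: the union of all paths of `G` starting at `x`
whose second vertex belongs to `Y`. -/
def subtreeVerts {V : Type*} (G : SimpleGraph V) (x : V) (Y : Set V) : Set V :=
  {v | v = x ∨ ∃ w : G.Walk x v, w.IsPath ∧ w.getVert 1 ∈ Y ∧ ¬ w.Nil}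

/-- The tree `T⁺_{t,Y}`: the restriction of `T` to `s` together with a fresh node `none`
made adjacent to `t`. -/
def plusGraph {ι : Type*} (T : SimpleGraph ι) (s : Set ι) (t : ι) :
    SimpleGraph (Option s) where
  Adj a b :=
    (∃ u v : s, a = some u ∧ b = some v ∧ T.Adj u v) ∨
    (a = none ∧ ∃ v : s, b = some v ∧ (v : ι) = t) ∨
    (b = none ∧ ∃ u : s, a = some u ∧ (u : ι) = t)
  symm := ⟨by
    rintro a b (⟨u, v, rfl, rfl, h⟩ | ⟨rfl, v, rfl, hv⟩ | ⟨rfl, u, rfl, hu⟩)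
    · exact Or.inl ⟨v, u, rfl, rfl, h.symm⟩
    · exact Or.inr (Or.inr ⟨rfl, v, rfl, hv⟩)
    · exact Or.inr (Or.inl ⟨rfl, u, rfl, hu⟩)⟩
  loopless := ⟨by
    rintro a (⟨u, v, rfl, h1, h2⟩ | ⟨rfl, v, h, -⟩ | ⟨rfl, u, h, -⟩)
    · obtain rfl : u = v := Option.some_injective _ h1
      exact T.loopless.irrefl _ h2
    · exact absurd h (by simp)
    · exact absurd h (by simp)⟩

/-- `ξ'(n,k,d)` from the paper. -/
def xi' (k d : ℕ) : ℕ → ℕ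
  | 0 => (3*k+1)*d+1
  | n+1 => ((3*k+1)*d)^2 * xi' k d n + 1
theorem cover_trick {α : Type*} (H : Hypergraph' α) (d k : ℕ) (hk : 1 ≤ k)
    (h2d : H.Is2dHypergraph d)
    (U eU : Finset α) (heU : eU ∈ H.edges) (hUeU : U ⊆ eU)
    (hcard : (3 * k + 1) * d < U.card)
    (e : Fin (3 * k + 1) → Finset α) (he : ∀ i, e i ∈ H.edges)
    (hcover : eU ⊆ Finset.univ.biUnion e) :
    ∃ i, eU = e i := by
  by_contra h
  push_neg at h
  have hsub : U ⊆ Finset.univ.biUnion fun i => eU ∩ e i := by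
    intro x hx
    have hxe := hcover (hUeU hx)
    simp only [Finset.mem_biUnion, Finset.mem_inter] at hxe ⊢
    obtain ⟨i, -, hi⟩ := hxe
    exact ⟨i, Finset.mem_univ i, hUeU hx, hi⟩
  have hle : U.card ≤ (3 * k + 1) * d := by
    calc U.card ≤ (Finset.univ.biUnion fun i => eU ∩ e i).card :=
          Finset.card_le_card hsub
      _ ≤ ∑ i : Fin (3 * k + 1), (eU ∩ e i).card := Finset.card_biUnion_le
      _ ≤ ∑ _i : Fin (3 * k + 1), d := by
          apply Finset.sum_le_sum
          intro i _
          exact h2d eU heU (e i) (he i) (h i)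
      _ = (3 * k + 1) * d := by simp [Finset.sum_const, mul_comm]
  omega
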